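/- For any real x > 0, any m, n ∈ ℕ, and any function f : (0,∞) → ℝ, the following identity holds: f(x+n) = Σ_{j=0}^{m} C(n,j)·Δ^j f(x) + Σ_{k=0}^{n−1} C(n−k−1, m)·Δ^{m+1} f(x+k). -/
import Mathlib


open Finset Filter

/-- Forward difference operator: `Δ f x = f (x + 1) - f x`. -/
noncomputable def fdiff (f : ℝ → ℝ) : ℝ → ℝ := fun x => f (x + 1) - f x

/-- Generalized binomial coefficient `C(x, j) = x (x-1) ⋯ (x-j+1) / j!`. -/
noncomputable def gbinom (x : ℝ) (j : ℕ) : ℝ :=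
  (∏ i ∈ Finset.range j, (x - i)) / (Nat.factorial j)

/-- Divided difference of `f` at the points `x 0, …, x (n-1)`. -/
noncomputable def divDiff (f : ℝ → ℝ) {n : ℕ} (x : Fin n → ℝ) : ℝ :=
  ∑ i, f (x i) / ∏ j ∈ Finset.univ.erase i, (x i - x j)

/-- `f` is `p`-convex on the set `S`: every divided difference of `f`
at `p + 2` pairwise distinct points of `S` is nonnegative. -/
def ConvexOrderOn (f : ℝ → ℝ) (p : ℕ) (S : Set ℝ) : Prop :=
  ∀ x : Fin (p + 2) → ℝ, (∀ i, x i ∈ S) → Function.Injective x → 0 ≤ divDiff f x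

/-- The class `K^p`: functions that are eventually `p`-convex or eventually `p`-concave. -/
def EvK (p : ℕ) (f : ℝ → ℝ) : Prop :=
  (∃ a > (0 : ℝ), ConvexOrderOn f p (Set.Ioi a)) ∨
    (∃ a > (0 : ℝ), ConvexOrderOn (fun x => -f x) p (Set.Ioi a))

/-- The class `D^p`: functions with `Δ^p f (n) → 0` as `n → ∞` along the integers. -/
def DD (p : ℕ) (f : ℝ → ℝ) : Prop :=
  Filter.Tendsto (fun n : ℕ => (fdiff^[p] f) n) Filter.atTop (nhds 0)

/-- The digamma function `ψ = Γ'/Γ`. -/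
noncomputable def digamma (x : ℝ) : ℝ := deriv Real.Gamma x / Real.Gamma x

/-- A multiple-gamma sequence: `G 0 = id`, `G (m+1) (x+1) = G m x * G (m+1) x`,
`G m 1 = 1`, each `G m` is positive and `C^∞` on `(0,∞)`, and the `m`-th derivative
of `ln ∘ G m` is increasing on `(0,∞)`. -/
def IsMultipleGammaSeq (G : ℕ → ℝ → ℝ) : Prop :=
  (∀ m, ∀ x > (0 : ℝ), 0 < G m x) ∧
  (∀ m, ContDiffOn ℝ ⊤ (G m) (Set.Ioi 0)) ∧
  (∀ x > (0 : ℝ), G 0 x = x) ∧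
  (∀ m, ∀ x > (0 : ℝ), G (m + 1) (x + 1) = G m x * G (m + 1) x) ∧
  (∀ m, G m 1 = 1) ∧
  (∀ m, StrictMonoOn
    (iteratedDerivWithin m (fun x => Real.log (G m x)) (Set.Ioi 0)) (Set.Ioi 0))


lemma gbinom_zero_right (y : ℝ) : gbinom y 0 = 1 := by
  simp [gbinom]

lemma gbinom_zero_left (j : ℕ) : gbinom 0 (j + 1) = 0 := by
  unfold gbinom
  rw [Finset.prod_eq_zero (Finset.mem_range.2 (Nat.succ_pos j)) (by simp)]
  simp

lemma gbinom_pascal (y : ℝ) (j : ℕ) :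
    gbinom (y + 1) (j + 1) = gbinom y (j + 1) + gbinom y j := by
  unfold gbinom
  rw [Finset.prod_range_succ', Finset.prod_range_succ]
  have h1 : (∏ i ∈ Finset.range j, (y + 1 - ((i + 1 : ℕ) : ℝ)))
      = ∏ i ∈ Finset.range j, (y - i) := by
    refine Finset.prod_congr rfl fun i _ => ?_
    push_cast; ring
  rw [h1, Nat.factorial_succ]
  have hj : (Nat.factorial j : ℝ) ≠ 0 := Nat.cast_ne_zero.2 (Nat.factorial_ne_zero j)
  have hj1 : ((j : ℝ) + 1) ≠ 0 := by positivity
  push_cast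
  field_simp
  ring

lemma sum_pascal (F : ℕ → ℝ) (y : ℝ) (m : ℕ) :
    ∑ j ∈ Finset.range (m + 1), gbinom y j * (F j + F (j + 1)) =
      (∑ j ∈ Finset.range (m + 1), gbinom (y + 1) j * F j) + gbinom y m * F (m + 1) := by
  induction m with
  | zero => simp [gbinom_zero_right]
  | succ m ih =>
      rw [Finset.sum_range_succ _ (m + 1),
        Finset.sum_range_succ (fun j => gbinom (y + 1) j * F j) (m + 1), ih, gbinom_pascal]
      ring

lemma key (m : ℕ) (f : ℝ → ℝ) : ∀ n : ℕ, ∀ x : ℝ,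
    f (x + n) =
      (∑ j ∈ Finset.range (m + 1), gbinom (n : ℝ) j * (fdiff^[j] f) x) +
        ∑ k ∈ Finset.range n, gbinom ((n : ℝ) - k - 1) m * (fdiff^[m + 1] f) (x + k) := by
  intro n
  induction n with
  | zero =>
      intro x
      simp only [Nat.cast_zero, add_zero, Finset.range_zero, Finset.sum_empty]
      rw [Finset.sum_eq_single 0]
      · simp [gbinom_zero_right]
      · intro j hj hne
        obtain ⟨j, rfl⟩ := Nat.exists_eq_succ_of_ne_zero hne
        rw [gbinom_zero_left]; ring
      · intro h; simp at h
  | succ n ih =>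
      intro x
      have hstep : ∀ j : ℕ, (fdiff^[j] f) (x + 1)
          = (fdiff^[j] f) x + (fdiff^[j + 1] f) x := by
        intro j
        rw [Function.iterate_succ_apply']
        show _ = _ + (fdiff (fdiff^[j] f)) x
        unfold fdiff; ring
      have h0 : x + ((n : ℕ) + 1 : ℕ) = (x + 1) + n := by push_cast; ring
      rw [h0, ih (x + 1)]
      have e1 : ∑ j ∈ Finset.range (m + 1), gbinom (n : ℝ) j * (fdiff^[j] f) (x + 1)
          = (∑ j ∈ Finset.range (m + 1), gbinom ((n : ℝ) + 1) j * (fdiff^[j] f) x)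
            + gbinom (n : ℝ) m * (fdiff^[m + 1] f) x := by
        rw [← sum_pascal (fun j => (fdiff^[j] f) x) (n : ℝ) m]
        exact Finset.sum_congr rfl fun j _ => by rw [hstep j]
      have e2 : ∑ k ∈ Finset.range (n + 1),
            gbinom (((n + 1 : ℕ) : ℝ) - k - 1) m * (fdiff^[m + 1] f) (x + k)
          = (∑ k ∈ Finset.range n,
              gbinom ((n : ℝ) - k - 1) m * (fdiff^[m + 1] f) (x + 1 + k))
            + gbinom (n : ℝ) m * (fdiff^[m + 1] f) x := by
        rw [Finset.sum_range_succ']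
        congr 1
        · refine Finset.sum_congr rfl fun k _ => ?_
          have h1 : ((n + 1 : ℕ) : ℝ) - ((k + 1 : ℕ) : ℝ) - 1 = (n : ℝ) - k - 1 := by
            push_cast; ring
          have h2 : x + ((k + 1 : ℕ) : ℝ) = x + 1 + k := by push_cast; ring
          rw [h1, h2]
        · have h1 : ((n + 1 : ℕ) : ℝ) - ((0 : ℕ) : ℝ) - 1 = (n : ℝ) := by push_cast; ring
          have h2 : x + ((0 : ℕ) : ℝ) = x := by push_cast; ring
          rw [h1, h2]
      rw [e1, e2]
      push_cast
      ring

/-- Discrete counterpart of Taylor's theorem: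
`f(x+n) = ∑_{j=0}^m C(n,j) Δ^j f(x) + ∑_{k=0}^{n-1} C(n-k-1,m) Δ^{m+1} f(x+k)`. -/
theorem stmt_0 (x : ℝ) (hx : 0 < x) (m n : ℕ) (f : ℝ → ℝ) :
    f (x + n) =
      (∑ j ∈ Finset.range (m + 1), gbinom (n : ℝ) j * (fdiff^[j] f) x) +
        ∑ k ∈ Finset.range n, gbinom ((n : ℝ) - k - 1) m * (fdiff^[m + 1] f) (x + k) := by
  exact key m f n x
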